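/- Let V be a finite-dimensional real inner product space of even dimension m ≥ 2, and for 0 ≠ z ∈ V let ρ_z denote the orthogonal reflection across the hyperplane (ℝz)^⊥. Then the subgroup of GL(V) generated by {−‖z‖² ρ_z : z ∈ V, z ≠ 0} equals the conformal group CO(V) = {c·k : c ∈ ℝ, c ≠ 0, k ∈ O(V)}. -/

import Mathlib

open scoped RealInnerProductSpace

open Submodule

/-!
The maps `-‖z‖² ρ_z` are conformal, so they generate a subgroup of `CO(V)`. Conversely, squaring
`-‖z‖² ρ_z` gives every positive homothety, and the product of the `-ρ_e` over an orthonormal basis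
is `(-1)^(m-1) = -1` because `m` is even; hence all homotheties lie in the subgroup, then every
reflection `ρ_z`, and by Cartan–Dieudonné all of `O(V)`.
-/

def LinearIsometryEquiv.toLinearEquivHom {R E : Type*} [Semiring R] [SeminormedAddCommGroup E]
    [Module R E] : (E ≃ₗᵢ[R] E) →* (E ≃ₗ[R] E) where
  toFun := LinearIsometryEquiv.toLinearEquiv
  map_one' := rfl
  map_mul' _ _ := rfl

lemma neg_sq_norm_ne_zero {E : Type*} [NormedAddCommGroup E] {z : E} (hz : z ≠ 0) :
    -‖z‖ ^ 2 ≠ 0 :=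
  neg_ne_zero.2 (pow_ne_zero 2 (norm_ne_zero_iff.2 hz))

section

variable {V : Type*} [NormedAddCommGroup V] [InnerProductSpace ℝ V]

variable (V) in
abbrev homothety : ℝˣ →* V ≃ₗ[ℝ] V := DistribMulAction.toModuleAut ℝ V

@[simp]
lemma homothety_apply (u : ℝˣ) (x : V) : homothety V u x = (u : ℝ) • x := rfl

variable (V) in
def conformalGroup : Subgroup (V ≃ₗ[ℝ] V) where
  carrier := {f | ∃ (c : ℝ) (k : V ≃ₗ[ℝ] V), c ≠ 0 ∧
    (∀ x y : V, ⟪k x, k y⟫ = ⟪x, y⟫) ∧ ∀ x : V, f x = c • k x}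
  one_mem' := ⟨1, 1, one_ne_zero, fun _ _ => rfl, fun x => (one_smul ℝ x).symm⟩
  mul_mem' := by
    rintro f g ⟨c, k, hc, hk, hf⟩ ⟨d, l, hd, hl, hg⟩
    refine ⟨c * d, k * l, mul_ne_zero hc hd, fun x y => (hk _ _).trans (hl x y), fun x => ?_⟩
    simp [hf, hg, smul_smul]
  inv_mem' := by
    rintro f ⟨c, k, hc, hk, hf⟩
    refine ⟨c⁻¹, k⁻¹, inv_ne_zero hc, fun x y => ?_, fun x => f.injective ?_⟩
    · simpa using (hk (k.symm x) (k.symm y)).symm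
    · change f (f.symm x) = f (c⁻¹ • k.symm x)
      rw [f.apply_symm_apply, hf, map_smul, smul_smul, mul_inv_cancel₀ hc, one_smul,
        k.apply_symm_apply]

variable (V) in
def scaledReflections : Set (V ≃ₗ[ℝ] V) :=
  {f | ∃ z : V, z ≠ 0 ∧ f z = ‖z‖ ^ 2 • z ∧ ∀ w : V, ⟪w, z⟫ = 0 → f w = -‖z‖ ^ 2 • w}

noncomputable def scaledReflection (z : V) (hz : z ≠ 0) : V ≃ₗ[ℝ] V :=
  homothety V (Units.mk0 _ (neg_sq_norm_ne_zero hz)) * (reflection (ℝ ∙ z)ᗮ).toLinearEquiv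

lemma scaledReflection_apply {z : V} (hz : z ≠ 0) (x : V) :
    scaledReflection z hz x = -‖z‖ ^ 2 • reflection (ℝ ∙ z)ᗮ x := rfl

lemma scaledReflection_apply_self {z : V} (hz : z ≠ 0) :
    scaledReflection z hz z = ‖z‖ ^ 2 • z := by
  simp [scaledReflection_apply, reflection_orthogonalComplement_singleton_eq_neg]

lemma scaledReflection_apply_of_inner_eq_zero {z w : V} (hz : z ≠ 0) (hw : ⟪w, z⟫ = 0) :
    scaledReflection z hz w = -‖z‖ ^ 2 • w := by
  rw [scaledReflection_apply,
    reflection_mem_subspace_eq_self (mem_orthogonal_singleton_iff_inner_left.2 hw)]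

lemma mem_scaledReflections_iff {f : V ≃ₗ[ℝ] V} :
    f ∈ scaledReflections V ↔ ∃ (z : V) (hz : z ≠ 0), f = scaledReflection z hz := by
  refine ⟨fun ⟨z, hz, hfz, hf⟩ => ⟨z, hz, ?_⟩, ?_⟩
  · refine LinearMap.ext_on_codisjoint (isCompl_orthogonal (ℝ ∙ z)).codisjoint ?_ ?_
    · intro x hx
      obtain ⟨a, rfl⟩ := mem_span_singleton.1 hx
      simp [hfz, scaledReflection_apply_self]
    · intro w hw
      have hwz : ⟪w, z⟫ = 0 := mem_orthogonal_singleton_iff_inner_left.1 hw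
      simp [hf w hwz, scaledReflection_apply_of_inner_eq_zero hz hwz]
  · rintro ⟨z, hz, rfl⟩
    exact ⟨z, hz, scaledReflection_apply_self hz,
      fun w hw => scaledReflection_apply_of_inner_eq_zero hz hw⟩

lemma scaledReflections_subset_conformalGroup :
    scaledReflections V ⊆ conformalGroup V := by
  intro f hf
  obtain ⟨z, hz, rfl⟩ := mem_scaledReflections_iff.1 hf
  exact ⟨_, _, neg_sq_norm_ne_zero hz, (reflection (ℝ ∙ z)ᗮ).inner_map_map,
    scaledReflection_apply hz⟩

lemma scaledReflection_mem_closure {z : V} (hz : z ≠ 0) :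
    scaledReflection z hz ∈ Subgroup.closure (scaledReflections V) :=
  Subgroup.subset_closure (mem_scaledReflections_iff.2 ⟨z, hz, rfl⟩)

lemma homothety_mem_closure_of_pos {u : ℝˣ} (hu : 0 < (u : ℝ)) :
    homothety V u ∈ Subgroup.closure (scaledReflections V) := by
  rcases subsingleton_or_nontrivial V with hV | hV
  · convert (Subgroup.closure (scaledReflections V)).one_mem
    exact LinearEquiv.ext fun _ => Subsingleton.elim _ _
  obtain ⟨z, hz⟩ := exists_norm_eq V (Real.sqrt_nonneg √(u : ℝ))
  have hz0 : z ≠ 0 := by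
    rw [← norm_pos_iff, hz]
    positivity
  have hz4 : ‖z‖ ^ 2 * ‖z‖ ^ 2 = (u : ℝ) := by
    rw [hz, Real.sq_sqrt (Real.sqrt_nonneg _), Real.mul_self_sqrt hu.le]
  have hsq : scaledReflection z hz0 * scaledReflection z hz0 = homothety V u := by
    ext x
    simp [scaledReflection_apply, smul_smul, hz4, Units.smul_def]
  exact hsq ▸ mul_mem (scaledReflection_mem_closure hz0) (scaledReflection_mem_closure hz0)

lemma list_prod_scaledReflection_apply {ι : Type*} [DecidableEq ι] {b : ι → V}
    (hb : Orthonormal ℝ b) (l : List ι) (j : ι) :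
    (l.map fun i => scaledReflection (b i) (hb.ne_zero i)).prod (b j) =
      (-1 : ℝ) ^ (l.length + l.count j) • b j := by
  induction l with
  | nil => simp
  | cons i l ih =>
    rw [List.map_cons, List.prod_cons, LinearEquiv.mul_apply, ih, map_smul]
    by_cases hij : i = j
    · subst hij
      rw [scaledReflection_apply_self, hb.1 i, List.count_cons_self, List.length_cons]
      module
    · rw [scaledReflection_apply_of_inner_eq_zero _ (hb.2 (Ne.symm hij)), hb.1 i,
        List.count_cons_of_ne hij, List.length_cons]
      module

variable [FiniteDimensional ℝ V]

lemma homothety_neg_one_mem_closure (hV : Even (Module.finrank ℝ V)) :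
    homothety V (-1) ∈ Subgroup.closure (scaledReflections V) := by
  let b := stdOrthonormalBasis ℝ V
  -- `b j` is fixed by its own factor `-ρ_{b j}` and negated by the other, odd in number, factors
  have hprod :
      ((List.finRange _).map fun i => scaledReflection (b i) (b.orthonormal.ne_zero i)).prod =
        homothety V (-1) := by
    refine b.toBasis.ext' fun j => ?_
    rw [OrthonormalBasis.coe_toBasis, list_prod_scaledReflection_apply b.orthonormal,
      List.count_eq_one_of_mem (List.nodup_finRange _) (List.mem_finRange j), List.length_finRange,
      (hV.add_one).neg_one_pow]
    simp
  rw [← hprod]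
  refine Subgroup.list_prod_mem _ fun g hg => ?_
  obtain ⟨i, -, rfl⟩ := List.mem_map.1 hg
  exact scaledReflection_mem_closure _

lemma homothety_mem_closure (hV : Even (Module.finrank ℝ V)) (u : ℝˣ) :
    homothety V u ∈ Subgroup.closure (scaledReflections V) := by
  rcases lt_or_gt_of_ne u.ne_zero with hu | hu
  · have hu' : 0 < ((-u : ℝˣ) : ℝ) := by simpa using hu
    have := mul_mem (homothety_neg_one_mem_closure hV) (homothety_mem_closure_of_pos hu')
    rwa [← map_mul, neg_one_mul, neg_neg] at this
  · exact homothety_mem_closure_of_pos hu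

lemma reflection_mem_closure (hV : Even (Module.finrank ℝ V)) (v : V) :
    (reflection (ℝ ∙ v)ᗮ).toLinearEquiv ∈ Subgroup.closure (scaledReflections V) := by
  by_cases hv : v = 0
  · convert (Subgroup.closure (scaledReflections V)).one_mem
    ext x
    exact reflection_mem_subspace_eq_self (by simp [hv])
  · have := mul_mem (homothety_mem_closure hV (Units.mk0 _ (neg_sq_norm_ne_zero hv))⁻¹)
      (scaledReflection_mem_closure hv)
    rwa [scaledReflection, map_inv, inv_mul_cancel_left] at this

lemma toLinearEquiv_mem_closure (hV : Even (Module.finrank ℝ V)) (k : V ≃ₗᵢ[ℝ] V) :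
    k.toLinearEquiv ∈ Subgroup.closure (scaledReflections V) := by
  have : (⊤ : Subgroup (V ≃ₗᵢ[ℝ] V)).map LinearIsometryEquiv.toLinearEquivHom ≤
      Subgroup.closure (scaledReflections V) := by
    rw [← LinearIsometryEquiv.reflections_generate, MonoidHom.map_closure, Subgroup.closure_le]
    rintro _ ⟨_, ⟨v, rfl⟩, rfl⟩
    exact reflection_mem_closure hV v
  exact this ⟨k, trivial, rfl⟩

theorem closure_scaledReflections (hV : Even (Module.finrank ℝ V)) :
    Subgroup.closure (scaledReflections V) = conformalGroup V := by
  refine le_antisymm ((Subgroup.closure_le _).2 scaledReflections_subset_conformalGroup) ?_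
  rintro f ⟨c, k, hc, hk, hf⟩
  have hfk : f = homothety V (Units.mk0 c hc) * (k.isometryOfInner hk).toLinearEquiv :=
    LinearEquiv.ext hf
  rw [hfk]
  exact mul_mem (homothety_mem_closure hV _) (toLinearEquiv_mem_closure hV _)

end

theorem stmt7_general {V : Type*} [NormedAddCommGroup V] [InnerProductSpace ℝ V]
    [FiniteDimensional ℝ V]
    (m : ℕ) (hmeven : Even m) (hdim : Module.finrank ℝ V = m) :
    (Subgroup.closure {f : V ≃ₗ[ℝ] V | ∃ z : V, z ≠ 0 ∧ f z = ‖z‖ ^ 2 • z ∧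
        ∀ w : V, ⟪w, z⟫ = 0 → f w = -‖z‖ ^ 2 • w} : Set (V ≃ₗ[ℝ] V)) =
      {f : V ≃ₗ[ℝ] V | ∃ (c : ℝ) (k : V ≃ₗ[ℝ] V), c ≠ 0 ∧
        (∀ x y : V, ⟪k x, k y⟫ = ⟪x, y⟫) ∧ ∀ x : V, f x = c • k x} :=
  congrArg SetLike.coe (closure_scaledReflections (hdim ▸ hmeven))

/-- Let `V` be a finite-dimensional real inner product space of even
dimension `m ≥ 2`.  The subgroup of `GL(V)` generated by the maps `-‖z‖² ρ_z` for
`0 ≠ z ∈ V` (where `-‖z‖² ρ_z` sends `z` to `‖z‖² z` and `w` to `-‖z‖² w` for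
`w ⊥ z`) equals the conformal group `CO(V) = {c·k : c ∈ ℝ, c ≠ 0, k ∈ O(V)}`. -/
theorem stmt7 {V : Type*} [NormedAddCommGroup V] [InnerProductSpace ℝ V]
    [FiniteDimensional ℝ V]
    (m : ℕ) (hm : 2 ≤ m) (hmeven : Even m) (hdim : Module.finrank ℝ V = m) :
    (Subgroup.closure {f : V ≃ₗ[ℝ] V | ∃ z : V, z ≠ 0 ∧ f z = ‖z‖ ^ 2 • z ∧
        ∀ w : V, ⟪w, z⟫ = 0 → f w = -‖z‖ ^ 2 • w} : Set (V ≃ₗ[ℝ] V)) =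
      {f : V ≃ₗ[ℝ] V | ∃ (c : ℝ) (k : V ≃ₗ[ℝ] V), c ≠ 0 ∧
        (∀ x y : V, ⟪k x, k y⟫ = ⟪x, y⟫) ∧ ∀ x : V, f x = c • k x} :=
  stmt7_general m hmeven hdim
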